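/- For any string s, the size of the novLZ3 parsing of s is less than or equal to the size of any novLZ3-type parsing of s. -/

import Mathlib

attribute [local instance] Classical.propDecidable

/-- `PermOv s i ℓ` : the substring of `s` of length `ℓ` starting at 0-indexed position `i`
has an occurrence starting at some earlier position `j < i` (possibly overlapping it). -/
def PermOv {α : Type*} (s : List α) (i ℓ : ℕ) : Prop :=
  ∃ j < i, (s.drop j).take ℓ = (s.drop i).take ℓ

/-- `PermNov s i ℓ` : the substring of `s` of length `ℓ` starting at 0-indexed position `i`
has an occurrence starting at some position `j` with `j + ℓ ≤ i` (not overlapping it). -/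
def PermNov {α : Type*} (s : List α) (i ℓ : ℕ) : Prop :=
  ∃ j, j + ℓ ≤ i ∧ (s.drop j).take ℓ = (s.drop i).take ℓ

/-- `PermOv3 s i ℓ` : the substring of `s` of length `ℓ - 1` starting at 0-indexed position `i`
(i.e. the phrase of length `ℓ` starting at `i` minus its last letter) has an occurrence
starting at some earlier position `j < i` (possibly overlapping). -/
def PermOv3 {α : Type*} (s : List α) (i ℓ : ℕ) : Prop :=
  ∃ j < i, (s.drop j).take (ℓ - 1) = (s.drop i).take (ℓ - 1)

/-- `PermNov3 s i ℓ` : the substring of `s` of length `ℓ - 1` starting at 0-indexed position `i`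
has an occurrence starting at some position `j` with `j + (ℓ - 1) ≤ i` (so this occurrence
ends before position `i`). -/
def PermNov3 {α : Type*} (s : List α) (i ℓ : ℕ) : Prop :=
  ∃ j, j + (ℓ - 1) ≤ i ∧ (s.drop j).take (ℓ - 1) = (s.drop i).take (ℓ - 1)

/-- Length of the greedy phrase starting at 0-indexed position `i`: the largest
`ℓ ≤ |s| - i` permitted by `P`, or `1` (a single letter) if no length is permitted. -/
noncomputable def phraseLen {α : Type*} (P : List α → ℕ → ℕ → Prop) (s : List α) (i : ℕ) : ℕ :=
  max 1 (Nat.findGreatest (fun ℓ => P s i ℓ) (s.length - i))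

/-- The list of phrases of the greedy parsing (w.r.t. the permission predicate `P`)
of the suffix of `s` starting at 0-indexed position `i`. -/
noncomputable def phrasesFrom {α : Type*} (P : List α → ℕ → ℕ → Prop) (s : List α) (i : ℕ) :
    List (List α) :=
  if _h : i < s.length then
    (s.drop i).take (phraseLen P s i) :: phrasesFrom P s (i + phraseLen P s i)
  else []
  termination_by s.length - i
  decreasing_by
    have h1 : 1 ≤ phraseLen P s i := by unfold phraseLen; exact Nat.le_max_left _ _
    omega

/-- The LZ parsing of `s` (phrases may overlap their earlier occurrences). -/
noncomputable def lzPhrases {α : Type*} (s : List α) : List (List α) := phrasesFrom PermOv s 0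
/-- The novLZ parsing of `s` (earlier occurrences may not overlap the phrases). -/
noncomputable def novlzPhrases {α : Type*} (s : List α) : List (List α) := phrasesFrom PermNov s 0
/-- The LZ3 parsing of `s`. -/
noncomputable def lz3Phrases {α : Type*} (s : List α) : List (List α) := phrasesFrom PermOv3 s 0
/-- The novLZ3 parsing of `s`. -/
noncomputable def novlz3Phrases {α : Type*} (s : List α) : List (List α) := phrasesFrom PermNov3 s 0

/-- `Zov`: the size (number of phrases) of the LZ parsing of `s`. -/
noncomputable def zOv {α : Type*} (s : List α) : ℕ := (lzPhrases s).length
/-- `Znon`: the size of the novLZ parsing of `s`. -/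
noncomputable def zNov {α : Type*} (s : List α) : ℕ := (novlzPhrases s).length
/-- `Zov₃`: the size of the LZ3 parsing of `s`. -/
noncomputable def zOv3 {α : Type*} (s : List α) : ℕ := (lz3Phrases s).length
/-- `Znon₃`: the size of the novLZ3 parsing of `s`. -/
noncomputable def zNov3 {α : Type*} (s : List α) : ℕ := (novlz3Phrases s).length

/-- `ts` is an LZ-type parsing of `s`: a decomposition of `s` into nonempty strings such that
each `tᵢ` is a single letter or occurs in `s[1..|t₁⋯tᵢ|-1]`. -/
def IsLZTypeParsing {α : Type*} (s : List α) (ts : List (List α)) : Prop :=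
  ts.flatten = s ∧ (∀ t ∈ ts, t ≠ []) ∧
    ∀ i (h : i < ts.length),
      ts[i].length = 1 ∨ ts[i] <:+: s.take ((ts.take (i + 1)).flatten.length - 1)

/-- `ts` is a novLZ-type parsing of `s`: a decomposition of `s` into nonempty strings such that
each `tᵢ` is a single letter or occurs in `t₁⋯tᵢ₋₁`. -/
def IsNovLZTypeParsing {α : Type*} (s : List α) (ts : List (List α)) : Prop :=
  ts.flatten = s ∧ (∀ t ∈ ts, t ≠ []) ∧
    ∀ i (h : i < ts.length),
      ts[i].length = 1 ∨ ts[i] <:+: (ts.take i).flatten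

/-- `ts` is an LZ3-type parsing of `s`: a decomposition of `s` into nonempty strings such that
each `tᵢ` minus its last letter occurs in `s[1..|t₁⋯tᵢ|-2]`. -/
def IsLZ3TypeParsing {α : Type*} (s : List α) (ts : List (List α)) : Prop :=
  ts.flatten = s ∧ (∀ t ∈ ts, t ≠ []) ∧
    ∀ i (h : i < ts.length),
      ts[i].dropLast <:+: s.take ((ts.take (i + 1)).flatten.length - 2)

/-- `ts` is a novLZ3-type parsing of `s`: a decomposition of `s` into nonempty strings such that
each `tᵢ` minus its last letter occurs in `t₁⋯tᵢ₋₁`. -/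
def IsNovLZ3TypeParsing {α : Type*} (s : List α) (ts : List (List α)) : Prop :=
  ts.flatten = s ∧ (∀ t ∈ ts, t ≠ []) ∧
    ∀ i (h : i < ts.length),
      ts[i].dropLast <:+: (ts.take i).flatten


/-!
Greedy parsing is optimal for any permission predicate closed under taking suffixes of a
permitted phrase. Compare the greedy parse with a competing parse phrase by phrase: if the
greedy phrase starts at `g` inside the competing phrase `[p, p + ℓ)`, then `[g, p + ℓ)` is itself
permitted, so the greedy phrase reaches at least `p + ℓ`. Hence after `k` phrases the greedy
parse is never behind the competing one. For novLZ3, the suffix of a permitted phrase is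
permitted because its last-letter-deleted part is a suffix of an earlier occurrence, shifted
right by the same amount.
-/

section

variable {α : Type*}

def SuffixClosed (P : List α → ℕ → ℕ → Prop) : Prop :=
  ∀ s i ℓ i', P s i ℓ → i ≤ i' → P s i' (i + ℓ - i')

lemma le_phraseLen {P : List α → ℕ → ℕ → Prop} {s : List α} {i ℓ : ℕ} (h : P s i ℓ)
    (hℓ : ℓ ≤ s.length - i) : ℓ ≤ phraseLen P s i :=
  (Nat.le_findGreatest hℓ h).trans (le_max_right _ _)

lemma phrasesFrom_of_length_le (P : List α → ℕ → ℕ → Prop) {s : List α} {i : ℕ}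
    (hi : s.length ≤ i) : phrasesFrom P s i = [] := by
  rw [phrasesFrom, dif_neg (by omega)]

lemma length_phrasesFrom_of_lt (P : List α → ℕ → ℕ → Prop) {s : List α} {i : ℕ}
    (hi : i < s.length) :
    (phrasesFrom P s i).length = (phrasesFrom P s (i + phraseLen P s i)).length + 1 := by
  rw [phrasesFrom, dif_pos hi, List.length_cons]

theorem length_phrasesFrom_le {P : List α → ℕ → ℕ → Prop} (hP : SuffixClosed P) {s : List α}
    {ls : List ℕ} {p g : ℕ} (hpg : p ≤ g) (hsum : p + ls.sum = s.length)
    (hls : ∀ k (hk : k < ls.length), P s (p + (ls.take k).sum) ls[k]) :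
    (phrasesFrom P s g).length ≤ ls.length := by
  induction ls generalizing p g with
  | nil => simp [phrasesFrom_of_length_le P (show s.length ≤ g by simp only [List.sum_nil] at hsum; omega)]
  | cons ℓ ls ih =>
    have hsum' : p + ℓ + ls.sum = s.length := by simp only [List.sum_cons] at hsum; omega
    have hls' : ∀ k (hk : k < ls.length), P s (p + ℓ + (ls.take k).sum) ls[k] := fun k hk => by
      have := hls (k + 1) (by simpa using hk)
      rwa [List.take_succ_cons, List.sum_cons, ← Nat.add_assoc] at this
    rw [List.length_cons]
    rcases le_or_gt (p + ℓ) g with hg | hg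
    · exact (ih hg hsum' hls').trans (Nat.le_succ _)
    · have hfirst : P s g (p + ℓ - g) := hP s p ℓ g (hls 0 (by simp)) hpg
      have hreach : p + ℓ ≤ g + phraseLen P s g := by
        have := le_phraseLen hfirst (by omega)
        omega
      rw [length_phrasesFrom_of_lt P (by omega)]
      exact Nat.succ_le_succ (ih hreach hsum' hls')

lemma permNov3_of_le_one (s : List α) (i : ℕ) {ℓ : ℕ} (hℓ : ℓ ≤ 1) : PermNov3 s i ℓ :=
  ⟨0, by omega, by simp [show ℓ - 1 = 0 by omega]⟩

lemma suffixClosed_permNov3 : SuffixClosed (@PermNov3 α) := by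
  intro s i ℓ i' ⟨j, hj, heq⟩ hi
  by_cases hshort : i + ℓ - i' ≤ 1
  · exact permNov3_of_le_one s i' hshort
  refine ⟨j + (i' - i), by omega, ?_⟩
  have hdrop := congrArg (List.drop (i' - i)) heq
  rw [List.drop_take, List.drop_take, List.drop_drop, List.drop_drop,
    show ℓ - 1 - (i' - i) = i + ℓ - i' - 1 by omega, show i + (i' - i) = i' by omega] at hdrop
  exact hdrop

lemma IsNovLZ3TypeParsing.permNov3 {s : List α} {ts : List (List α)}
    (h : IsNovLZ3TypeParsing s ts) (k : ℕ) (hk : k < ts.length) :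
    PermNov3 s (ts.take k).flatten.length ts[k].length := by
  obtain ⟨hflat, -, hocc⟩ := h
  obtain ⟨u, v, huv⟩ := hocc k hk
  have hs : s = (ts.take k).flatten ++ (ts[k] ++ (ts.drop (k + 1)).flatten) := by
    rw [← List.flatten_cons, ← List.drop_eq_getElem_cons hk, ← List.flatten_append,
      List.take_append_drop, hflat]
  have hlen : ts[k].dropLast.length = ts[k].length - 1 := List.length_dropLast
  refine ⟨u.length, ?_, ?_⟩
  · have := congrArg List.length huv
    simp only [List.length_append] at this
    omega
  · have hearlier : (s.drop u.length).take (ts[k].length - 1) = ts[k].dropLast := by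
      rw [hs, ← huv, List.append_assoc, List.append_assoc, List.drop_left, ← hlen,
        List.take_left]
    have hhere : (s.drop (ts.take k).flatten.length).take (ts[k].length - 1) = ts[k].dropLast := by
      rw [hs, List.drop_left, List.take_append_of_le_length (by omega), List.dropLast_eq_take]
    rw [hearlier, hhere]

end

/-- The novLZ3 parsing of any string `s` has the least size among all novLZ3-type parsings
of `s`. -/
theorem novlz3_optimal {α : Type*} (s : List α) (ts : List (List α))
    (h : IsNovLZ3TypeParsing s ts) : zNov3 s ≤ ts.length := by
  have hsum : 0 + (ts.map List.length).sum = s.length := by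
    rw [Nat.zero_add, ← List.length_flatten, h.1]
  have hls : ∀ k (hk : k < (ts.map List.length).length),
      PermNov3 s (0 + ((ts.map List.length).take k).sum) (ts.map List.length)[k] := by
    intro k hk
    rw [Nat.zero_add, ← List.map_take, ← List.length_flatten, List.getElem_map]
    exact h.permNov3 k (by simpa using hk)
  exact (length_phrasesFrom_le suffixClosed_permNov3 le_rfl hsum hls).trans_eq (List.length_map _)
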